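/- arXiv:1902.06485 — 3 statements merged into one kernel-verified Lean document; each statement's English description precedes it below -/
import Mathlib

section
/- Let f and g be slice functions on a circular domain Ω_D, induced by stem functions F = F_1 + ι F_2 and G = G_1 + ι G_2. If f(x) ≠ 0 at a point x ∈ Ω_D, then the slice product satisfies (f · g)(x) = f(x) · g(f(x)^{-1} x f(x)); if f(x) = 0, then (f · g)(x) = 0. -/
noncomputable section
open Quaternion

abbrev Q := Quaternion ℝ
def qi : Q := ⟨0,1,0,0⟩
def qj : Q := ⟨0,0,1,0⟩
def qk : Q := ⟨0,0,0,1⟩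

/-- The sphere of quaternionic imaginary units. -/
def QS : Set Q := {J | J ^ 2 = -1}

/-- The map `Φ_J : ℂ → ℍ`, `α + ιβ ↦ α + βJ`. -/
def PhiJ (J : Q) (z : ℂ) : Q := (z.re : Q) + z.im • J

/-- The circularization `Ω_D` of a set `D ⊆ ℂ`. -/
def circSet (D : Set ℂ) : Set Q := {x | ∃ J ∈ QS, ∃ z ∈ D, x = PhiJ J z}

/-- `F = F₁ + ι F₂` is a stem function on the conjugation-invariant set `D`. -/
structure IsStemOn (D : Set ℂ) (F₁ F₂ : ℂ → Q) : Prop where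
  conj_mem : ∀ z ∈ D, (starRingEnd ℂ) z ∈ D
  even : ∀ z ∈ D, F₁ ((starRingEnd ℂ) z) = F₁ z
  odd : ∀ z ∈ D, F₂ ((starRingEnd ℂ) z) = -F₂ z

/-- `f` is the slice function induced by the stem function `F = F₁ + ι F₂` on `D`. -/
def InducedBy (D : Set ℂ) (F₁ F₂ : ℂ → Q) (f : Q → Q) : Prop :=
  ∀ J ∈ QS, ∀ z ∈ D, f (PhiJ J z) = F₁ z + J * F₂ z

/-- Spherical value. -/
def svalue (f : Q → Q) (x : Q) : Q := (f x + f (star x)) / 2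

/-- Spherical derivative (on nonreal points). -/
def sderivS (f : Q → Q) (x : Q) : Q := (x.im : Q)⁻¹ * (f x - f (star x)) / 2

/-- The stem function `F G` (product in `ℍ ⊗ ℂ`) of the slice product `f ⬝ g`: first component. -/
def stemMul₁ (F₁ F₂ G₁ G₂ : ℂ → Q) : ℂ → Q := fun z => F₁ z * G₁ z - F₂ z * G₂ z
/-- Second component of the product stem function. -/
def stemMul₂ (F₁ F₂ G₁ G₂ : ℂ → Q) : ℂ → Q := fun z => F₁ z * G₂ z + F₂ z * G₁ z

/-- The stem function `F` is holomorphic on `D` (Cauchy-Riemann equations). -/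
def HolStemOn (D : Set ℂ) (F₁ F₂ : ℂ → Q) : Prop :=
  ∀ z ∈ D, DifferentiableAt ℝ F₁ z ∧ DifferentiableAt ℝ F₂ z ∧
    fderiv ℝ F₁ z Complex.I = -(fderiv ℝ F₂ z 1) ∧
    fderiv ℝ F₂ z Complex.I = fderiv ℝ F₁ z 1

/-- Partial derivative in the direction `v`. -/
def pd {E : Type*} [NormedAddCommGroup E] [NormedSpace ℝ E] (v : Q) (f : Q → E) : Q → E :=
  fun x => fderiv ℝ f x v

/-- The four-dimensional Laplacian. -/
def lap4 {E : Type*} [NormedAddCommGroup E] [NormedSpace ℝ E] (f : Q → E) : Q → E :=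
  fun x => pd 1 (pd 1 f) x + pd qi (pd qi f) x + pd qj (pd qj f) x + pd qk (pd qk f) x

/-- The Cauchy-Riemann-Fueter operator. -/
def CRF (f : Q → Q) : Q → Q :=
  fun x => pd 1 f x + qi * pd qi f x + qj * pd qj f x + qk * pd qk f x

theorem jensen_stmt6 (D : Set ℂ) (F₁ F₂ G₁ G₂ : ℂ → Q) (f g p : Q → Q)
    (hF : IsStemOn D F₁ F₂) (hG : IsStemOn D G₁ G₂)
    (hf : InducedBy D F₁ F₂ f) (hg : InducedBy D G₁ G₂ g)
    (hp : InducedBy D (stemMul₁ F₁ F₂ G₁ G₂) (stemMul₂ F₁ F₂ G₁ G₂) p) :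
    ∀ x ∈ circSet D,
      (f x ≠ 0 → p x = f x * g ((f x)⁻¹ * x * f x)) ∧ (f x = 0 → p x = 0) := by
  rintro x ⟨J, hJ, z, hz, rfl⟩
  have hJJ : J * J = -1 := by have h : J ^ 2 = -1 := hJ; rwa [sq] at h
  have hfx : f (PhiJ J z) = F₁ z + J * F₂ z := hf J hJ z hz
  have hpx : p (PhiJ J z) =
      (F₁ z * G₁ z - F₂ z * G₂ z) + J * (F₁ z * G₂ z + F₂ z * G₁ z) := hp J hJ z hz
  constructor
  · intro hne
    set a := f (PhiJ J z) with ha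
    have ha0 : a ≠ 0 := hne
    have hk : a * a⁻¹ = 1 := mul_inv_cancel₀ ha0
    have hk' : a⁻¹ * a = 1 := inv_mul_cancel₀ ha0
    have hJ' : (a⁻¹ * J * a) ∈ QS := by
      show (a⁻¹ * J * a) ^ 2 = -1
      rw [sq]
      calc (a⁻¹ * J * a) * (a⁻¹ * J * a) = a⁻¹ * J * (a * a⁻¹) * (J * a) := by noncomm_ring
        _ = a⁻¹ * (J * J) * a := by rw [hk]; noncomm_ring
        _ = a⁻¹ * (-1) * a := by rw [hJJ]
        _ = -1 := by rw [mul_neg_one, neg_mul, hk']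
    have hconj : a⁻¹ * PhiJ J z * a = PhiJ (a⁻¹ * J * a) z := by
      unfold PhiJ
      rw [← Quaternion.coe_mul_eq_smul, ← Quaternion.coe_mul_eq_smul]
      calc a⁻¹ * ((z.re : Q) + (z.im : Q) * J) * a
          = (z.re : Q) * (a⁻¹ * a) + (z.im : Q) * (a⁻¹ * J * a) := by
            rw [mul_add, ← Quaternion.coe_commutes z.re a⁻¹,
              ← mul_assoc a⁻¹ ((z.im:Q)) J, ← Quaternion.coe_commutes z.im a⁻¹]
            noncomm_ring
        _ = (z.re : Q) + (z.im : Q) * (a⁻¹ * J * a) := by rw [hk', mul_one]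
    have hgx : g (PhiJ (a⁻¹ * J * a) z) = G₁ z + (a⁻¹ * J * a) * G₂ z := hg _ hJ' z hz
    have key : F₁ z * G₁ z - F₂ z * G₂ z + J * (F₁ z * G₂ z + F₂ z * G₁ z)
        = a * G₁ z + J * a * G₂ z := by
      rw [hfx]
      calc F₁ z * G₁ z - F₂ z * G₂ z + J * (F₁ z * G₂ z + F₂ z * G₁ z)
          = (F₁ z + J * F₂ z) * G₁ z + (J * (F₁ z * G₂ z) + (J * J) * (F₂ z * G₂ z)) := by
            rw [hJJ]; noncomm_ring
        _ = (F₁ z + J * F₂ z) * G₁ z + J * (F₁ z + J * F₂ z) * G₂ z := by noncomm_ring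
    have hxa : a * (a⁻¹ * J * a) = J * a := by
      rw [← mul_assoc, ← mul_assoc, hk, one_mul]
    rw [hconj, hgx, hpx, key]
    show a * G₁ z + J * a * G₂ z = a * (G₁ z + a⁻¹ * J * a * G₂ z)
    rw [mul_add, ← mul_assoc, hxa]
  · intro h0
    rw [hfx] at h0
    have h1 : F₁ z = -(J * F₂ z) := eq_neg_of_add_eq_zero_left h0
    rw [hpx, h1]
    calc (-(J * F₂ z) * G₁ z - F₂ z * G₂ z) + J * (-(J * F₂ z) * G₂ z + F₂ z * G₁ z)
        = -(F₂ z * G₂ z) - (J * J) * (F₂ z * G₂ z) := by noncomm_ring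
      _ = 0 := by rw [hJJ]; noncomm_ring
end
end

section
/- If f is a slice-preserving slice function and g is any slice function on the same circular domain, then the slice product f · g coincides with the pointwise product: (f · g)(x) = f(x) g(x) for all x. -/
noncomputable section
open Quaternion

theorem jensen_stmt8 (D : Set ℂ) (F₁ F₂ G₁ G₂ : ℂ → Q) (f g p : Q → Q)
    (hF : IsStemOn D F₁ F₂) (hG : IsStemOn D G₁ G₂)
    (hreal : ∀ z ∈ D, (F₁ z).im = 0 ∧ (F₂ z).im = 0)
    (hf : InducedBy D F₁ F₂ f) (hg : InducedBy D G₁ G₂ g)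
    (hp : InducedBy D (stemMul₁ F₁ F₂ G₁ G₂) (stemMul₂ F₁ F₂ G₁ G₂) p) :
    ∀ x ∈ circSet D, p x = f x * g x := by
  rintro x ⟨J, hJ, z, hz, rfl⟩
  rw [hp J hJ z hz, hf J hJ z hz, hg J hJ z hz]
  have hc : ∀ a : Q, a.im = 0 → ∀ x : Q, a * x = x * a := by
    intro a ha x
    have h : a = (a.re : Q) := by rw [← Quaternion.re_add_im a, ha, add_zero]; simp
    nth_rewrite 1 [h]; nth_rewrite 2 [h]
    exact Quaternion.coe_commutes a.re x
  have h1 := hc _ (hreal z hz).1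
  have h2 := hc _ (hreal z hz).2
  have hJ2 : J * J = -1 := by rw [← sq]; exact hJ
  simp only [stemMul₁, stemMul₂]
  set a := F₁ z; set b := F₂ z; set c := G₁ z; set d := G₂ z
  have key : (a + J * b) * (c + J * d)
      = a * c + J * (a * d) + (J * (b * c) + J * (J * (b * d))) := by
    rw [add_mul, mul_add, mul_add, h1 (J * d), mul_assoc J d a, ← h1 d,
      mul_assoc J b c, mul_assoc J b (J * d), h2 (J * d), mul_assoc J d b, ← h2 d]
  rw [key, ← mul_assoc J J, hJ2, neg_one_mul, mul_add]
  abel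
end
end

section
/- For any slice function f on a circular domain Ω_D, the zero set of the normal function N(f) is the circularization of the zero set of f: V(N(f)) = ∪_{y ∈ V(f)} S_y, where S_y is the sphere (or single real point) of quaternions with the same real part and modulus as y. -/
noncomputable section
open Quaternion

/-!
On the sphere over `z`, the normal function takes the value
`N(f)(Φ_J z) = (|F₁ z|² - |F₂ z|²) + J · 2 Re(F₁ z · (F₂ z)‾)` with both coefficients real,
so it vanishes iff `|F₁ z| = |F₂ z|` and `F₁ z · (F₂ z)‾` is purely imaginary, that is, iff
`F₁ z + K F₂ z = f(Φ_K z)` vanishes for some imaginary unit `K`. Points of `Ω_D` with equal real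
part and modulus lie over `z` or over `z̄`, and `f(Φ_K z̄) = f(Φ_{-K} z)` by the parity of the stem
function, so this is the same as `f` vanishing somewhere on the sphere.
-/

theorem mem_QS_iff {J : Q} : J ∈ QS ↔ J.re = 0 ∧ normSq J = 1 := by
  refine ⟨fun hJ => ?_, fun ⟨hre, hnorm⟩ => ?_⟩
  · have hnorm : normSq J = 1 := by
      have hsq : normSq J ^ 2 = 1 := by
        rw [← map_pow, show J ^ 2 = -1 from hJ, normSq_neg, map_one]
      exact (pow_eq_one_iff_of_nonneg normSq_nonneg two_ne_zero).1 hsq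
    refine ⟨sq_eq_neg_normSq.1 ?_, hnorm⟩
    rw [hnorm]
    exact hJ
  · show J ^ 2 = -1
    rw [sq_eq_neg_normSq.2 hre, hnorm, coe_one]

theorem qi_mem_QS : qi ∈ QS :=
  mem_QS_iff.2 ⟨rfl, by rw [normSq_def']; norm_num [qi]⟩

theorem neg_mem_QS {J : Q} (hJ : J ∈ QS) : -J ∈ QS := by
  show (-J) ^ 2 = -1
  rw [neg_sq]
  exact hJ

theorem coe_add_mul_coe_eq_zero_iff {J : Q} (hJ : J ∈ QS) {r s : ℝ} :
    (r : Q) + J * s = 0 ↔ r = 0 ∧ s = 0 := by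
  refine ⟨fun h => ?_, fun ⟨hr, hs⟩ => by simp [hr, hs]⟩
  rw [← coe_commutes, coe_mul_eq_smul] at h
  have hr : r = 0 := by
    simpa [(mem_QS_iff.1 hJ).1] using congrArg QuaternionAlgebra.re h
  refine ⟨hr, ?_⟩
  rw [hr, coe_zero, zero_add, smul_eq_zero] at h
  exact h.resolve_right fun h0 => by simpa [h0] using (mem_QS_iff.1 hJ).2

theorem mul_star_sub_mul_star (a b : Q) :
    a * star a - b * star b = ((normSq a - normSq b : ℝ) : Q) := by
  rw [self_mul_star, self_mul_star, coe_sub]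

theorem mul_star_add_mul_star (a b : Q) :
    a * star b + b * star a = ((2 * (a * star b).re : ℝ) : Q) := by
  rw [← self_add_star', star_mul, star_star]

/-- For `b ≠ 0` the witness is `K = -a b̄ / |b|²`. -/
theorem exists_mem_QS_add_mul_eq_zero_iff (a b : Q) :
    (∃ K ∈ QS, a + K * b = 0) ↔ normSq a = normSq b ∧ (a * star b).re = 0 := by
  constructor
  · rintro ⟨K, hK, h⟩
    obtain ⟨hKre, hKnorm⟩ := mem_QS_iff.1 hK
    obtain rfl := eq_neg_of_add_eq_zero_left h
    refine ⟨by rw [normSq_neg, map_mul, hKnorm, one_mul], ?_⟩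
    rw [neg_mul, mul_assoc, self_mul_star, ← coe_commutes, coe_mul_eq_smul]
    simp [hKre]
  · rintro ⟨hnorm, hre⟩
    by_cases hb : b = 0
    · refine ⟨qi, qi_mem_QS, ?_⟩
      rw [hb, map_zero, normSq_eq_zero] at hnorm
      simp [hnorm, hb]
    have hb' : normSq b ≠ 0 := normSq_eq_zero.not.2 hb
    refine ⟨-((normSq b)⁻¹ • (a * star b)), mem_QS_iff.2 ⟨by simp [hre], ?_⟩, ?_⟩
    · rw [normSq_neg, normSq_smul, map_mul, normSq_star, hnorm]
      field_simp
    · rw [neg_mul, smul_mul_assoc, mul_assoc, star_mul_self, ← coe_commutes, coe_mul_eq_smul,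
        smul_smul, inv_mul_cancel₀ hb', one_smul, add_neg_cancel]

theorem re_PhiJ {J : Q} (hJ : J ∈ QS) (z : ℂ) : (PhiJ J z).re = z.re := by
  simp [PhiJ, (mem_QS_iff.1 hJ).1]

theorem norm_PhiJ {J : Q} (hJ : J ∈ QS) (z : ℂ) : ‖PhiJ J z‖ = ‖z‖ := by
  obtain ⟨hre, hnorm⟩ := mem_QS_iff.1 hJ
  have hsq : normSq (PhiJ J z) = Complex.normSq z := by
    rw [normSq_def', hre] at hnorm
    rw [normSq_def']
    simp only [PhiJ, re_add, imI_add, imJ_add, imK_add, re_coe, imI_coe, imJ_coe, imK_coe,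
      re_smul, imI_smul, imJ_smul, imK_smul, smul_eq_mul, hre, Complex.normSq_apply]
    linear_combination z.im ^ 2 * hnorm
  rw [← sq_eq_sq₀ (norm_nonneg _) (norm_nonneg _), Complex.sq_norm, ← hsq,
    normSq_eq_norm_mul_self, sq]

theorem Complex.eq_or_eq_conj_of_re_eq_of_norm_eq {z w : ℂ} (hre : z.re = w.re)
    (hnorm : ‖z‖ = ‖w‖) : w = z ∨ w = (starRingEnd ℂ) z := by
  have him : w.im ^ 2 = z.im ^ 2 := by
    have := congrArg (· ^ 2) hnorm
    simp only [Complex.sq_norm, Complex.normSq_apply] at this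
    rw [hre] at this
    linarith
  rcases sq_eq_sq_iff_eq_or_eq_neg.1 him with h | h
  · exact .inl (Complex.ext hre.symm h)
  · exact .inr (Complex.ext hre.symm h)

section Slice

variable {D : Set ℂ} {F₁ F₂ : ℂ → Q} {z : ℂ}

theorem normal_apply_PhiJ_eq_zero_iff {n : Q → Q}
    (hn : InducedBy D (stemMul₁ F₁ F₂ (fun z => star (F₁ z)) (fun z => star (F₂ z)))
      (stemMul₂ F₁ F₂ (fun z => star (F₁ z)) (fun z => star (F₂ z))) n)
    {J : Q} (hJ : J ∈ QS) (hz : z ∈ D) :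
    n (PhiJ J z) = 0 ↔ ∃ K ∈ QS, F₁ z + K * F₂ z = 0 := by
  rw [hn J hJ z hz, stemMul₁, stemMul₂, mul_star_sub_mul_star, mul_star_add_mul_star,
    coe_add_mul_coe_eq_zero_iff hJ, exists_mem_QS_add_mul_eq_zero_iff, sub_eq_zero,
    mul_eq_zero, or_iff_right two_ne_zero]

theorem exists_zero_on_sphere_iff {f : Q → Q} (hF : IsStemOn D F₁ F₂) (hf : InducedBy D F₁ F₂ f)
    (hz : z ∈ D) :
    (∃ y ∈ circSet D, f y = 0 ∧ z.re = y.re ∧ ‖z‖ = ‖y‖) ↔ ∃ K ∈ QS, F₁ z + K * F₂ z = 0 := by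
  constructor
  · rintro ⟨_, ⟨K, hK, w, hw, rfl⟩, hfy, hre, hnorm⟩
    rw [re_PhiJ hK] at hre
    rw [norm_PhiJ hK] at hnorm
    rw [hf K hK w hw] at hfy
    rcases Complex.eq_or_eq_conj_of_re_eq_of_norm_eq hre hnorm with rfl | rfl
    · exact ⟨K, hK, hfy⟩
    · refine ⟨-K, neg_mem_QS hK, ?_⟩
      rwa [hF.even z hz, hF.odd z hz, mul_neg, ← neg_mul] at hfy
  · rintro ⟨K, hK, hzero⟩
    exact ⟨PhiJ K z, ⟨K, hK, z, hz, rfl⟩, by rwa [hf K hK z hz],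
      (re_PhiJ hK z).symm, (norm_PhiJ hK z).symm⟩

end Slice

theorem jensen_stmt13 (D : Set ℂ) (F₁ F₂ : ℂ → Q) (f n : Q → Q)
    (hF : IsStemOn D F₁ F₂) (hf : InducedBy D F₁ F₂ f)
    (hn : InducedBy D (stemMul₁ F₁ F₂ (fun z => star (F₁ z)) (fun z => star (F₂ z)))
                      (stemMul₂ F₁ F₂ (fun z => star (F₁ z)) (fun z => star (F₂ z))) n) :
    {x ∈ circSet D | n x = 0} =
      {x ∈ circSet D | ∃ y ∈ circSet D, f y = 0 ∧ x.re = y.re ∧ ‖x‖ = ‖y‖} := by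
  ext x
  refine and_congr_right ?_
  rintro ⟨J, hJ, z, hz, rfl⟩
  rw [normal_apply_PhiJ_eq_zero_iff hn hJ hz, re_PhiJ hJ, norm_PhiJ hJ,
    exists_zero_on_sphere_iff hF hf hz]
end
end
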